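/- For each n ≥ 0, the map sending a pair (A, B) of commuting unitary matrices in U(n) to the unordered n-tuple of pairs of eigenvalues [(α₁,β₁),…,(αₙ,βₙ)] (with respect to a common orthonormal eigenbasis) induces a bijection Hom(ℤ×ℤ, U(n))/U(n) → Symⁿ(S¹×S¹). -/

import Mathlib

/-!
The real and imaginary parts of two commuting unitaries form a commuting family of Hermitian
matrices, so they have a common orthonormal eigenbasis: every commuting pair is conjugate to a
pair `diag γ` of diagonal unitaries, and its class is sent to the multiset of the `γ i`.

This is well defined: if a unitary `W` satisfies `diag γ' * W = W * diag γ`, then `W i j ≠ 0`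
forces `γ' i = γ j`, so `W` conjugates the indicator matrix of `{i | γ i = c}` to that of
`{i | γ' i = c}`, and taking traces shows that every `c` has the same multiplicity. Conversely,
equal multisets differ by a permutation of `Fin n`, which a permutation matrix realizes.
-/

open Matrix

/-- Pairs of commuting `n × n` unitary matrices. -/
def CommPair (n : ℕ) : Type :=
  {p : Matrix.unitaryGroup (Fin n) ℂ × Matrix.unitaryGroup (Fin n) ℂ // p.1 * p.2 = p.2 * p.1}

/-- Simultaneous conjugation relation on commuting pairs; the quotient is
`Hom(ℤ×ℤ, U(n))/U(n)`. -/
def conjRel (n : ℕ) : CommPair n → CommPair n → Prop := fun p q =>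
  ∃ U : Matrix.unitaryGroup (Fin n) ℂ,
    q.1.1 = U * p.1.1 * U⁻¹ ∧ q.1.2 = U * p.1.2 * U⁻¹

open Finset

theorem Finset.map_univ_val_eq_iff_card_filter_eq {ι β : Type*} [Fintype ι] [DecidableEq β]
    {f g : ι → β} :
    univ.val.map f = univ.val.map g ↔ ∀ c, #{i | f i = c} = #{i | g i = c} := by
  simp only [Multiset.ext, Multiset.count_map, eq_comm (a := (_ : β))]
  rfl

theorem Equiv.Perm.exists_comp_eq_of_card_filter_eq {ι β : Type*} [Fintype ι] [DecidableEq β]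
    {f g : ι → β} (h : ∀ c, #{i | f i = c} = #{i | g i = c}) :
    ∃ σ : Equiv.Perm ι, f ∘ σ = g := by
  have e (c : β) : {i // g i = c} ≃ {i // f i = c} :=
    Fintype.equivOfCardEq (by rw [Fintype.card_subtype, Fintype.card_subtype, h])
  exact ⟨Equiv.ofFiberEquiv e, funext (Equiv.ofFiberEquiv_map e)⟩

namespace Sym

variable {α : Type*} {n : ℕ}

def ofFn (f : Fin n → α) : Sym α n := ⟨univ.val.map f, by simp⟩

theorem ofFn_surjective : Function.Surjective (ofFn : (Fin n → α) → Sym α n) := by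
  classical
  intro s
  let e : Fin n ≃ (s : Multiset α).ToType :=
    (Fintype.equivFinOfCardEq (by rw [Multiset.card_coe, s.card_coe])).symm
  refine ⟨fun i => e i, coe_injective ?_⟩
  conv_rhs => rw [← Multiset.map_univ_coe (s : Multiset α), ← Multiset.map_univ_val_equiv e,
    Multiset.map_map]
  rfl

theorem ofFn_eq_ofFn_iff [DecidableEq α] {f g : Fin n → α} :
    ofFn f = ofFn g ↔ ∀ c, #{i | f i = c} = #{i | g i = c} :=
  coe_inj.symm.trans (map_univ_val_eq_iff_card_filter_eq (f := f) (g := g))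

end Sym

section ComplexStarModule

open ComplexStarModule

variable {A : Type*} [Ring A] [StarRing A] [Module ℂ A] [IsScalarTower ℂ A A]
  [SMulCommClass ℂ A A] [StarModule ℂ A] {a c : A}

theorem Commute.realPart_left (h : Commute a c) (h' : Commute (star a) c) :
    Commute (ℜ a : A) c := by
  rw [realPart_apply_coe]
  exact (h.add_left h').smul_left _

theorem Commute.imaginaryPart_left (h : Commute a c) (h' : Commute (star a) c) :
    Commute (ℑ a : A) c := by
  rw [imaginaryPart_apply_coe]
  exact ((h.sub_left h').smul_left _).smul_left _

end ComplexStarModule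

theorem Circle.coe_mem_unitary (z : Circle) : (z : ℂ) ∈ unitary ℂ := by
  rw [Unitary.mem_iff_star_mul_self, Complex.star_def, ← Complex.normSq_eq_conj_mul_self,
    Circle.normSq_coe, Complex.ofReal_one]

theorem DirectSum.IsInternal.exists_orthonormalBasis_forall_exists_mem {𝕜 E ι : Type*}
    [RCLike 𝕜] [NormedAddCommGroup E] [InnerProductSpace 𝕜 E] [FiniteDimensional 𝕜 E] {n : ℕ}
    (hn : Module.finrank 𝕜 E = n) [DecidableEq ι] {V : ι → Submodule 𝕜 E}
    (hV : DirectSum.IsInternal V)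
    (hV' : OrthogonalFamily 𝕜 (fun i => V i) fun i => (V i).subtypeₗᵢ) :
    ∃ b : OrthonormalBasis (Fin n) 𝕜 E, ∀ a, ∃ i, b a ∈ V i := by
  let _ := hV.submodule_iSupIndep.fintypeNeBotOfFiniteDimensional
  have hW := DirectSum.isInternal_ne_bot_iff.mpr hV
  have hW' := hV'.comp (Subtype.val_injective (p := fun i => V i ≠ ⊥))
  exact ⟨hW.subordinateOrthonormalBasis hn hW',
    fun a => ⟨_, hW.subordinateOrthonormalBasis_subordinate hn a hW'⟩⟩

open scoped Function in
theorem LinearMap.IsSymmetric.exists_orthonormalBasis_apply_eq_smul_of_commute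
    {𝕜 E ι : Type*} [RCLike 𝕜] [NormedAddCommGroup E] [InnerProductSpace 𝕜 E]
    [FiniteDimensional 𝕜 E] {n : ℕ} (hn : Module.finrank 𝕜 E = n) {T : ι → E →ₗ[𝕜] E}
    (hT : ∀ i, (T i).IsSymmetric) (hC : Pairwise (Commute on T)) :
    ∃ (b : OrthonormalBasis (Fin n) 𝕜 E) (χ : Fin n → ι → 𝕜), ∀ a i, T i (b a) = χ a i • b a := by
  classical
  have hV := directSum_isInternal_of_pairwise_commute hT hC
  obtain ⟨b, hb⟩ := hV.exists_orthonormalBasis_forall_exists_mem hn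
    (orthogonalFamily_iInf_eigenspaces hT)
  choose χ hχ using hb
  exact ⟨b, χ, fun a i => Module.End.mem_eigenspace_iff.mp <| (Submodule.mem_iInf _).mp (hχ a) i⟩

namespace Matrix

section Unitary

variable {m R : Type*} [Fintype m] [DecidableEq m] [CommRing R] [StarRing R]

theorem diagonal_mem_unitaryGroup_iff {d : m → R} :
    diagonal d ∈ unitaryGroup m R ↔ ∀ i, d i ∈ unitary R := by
  simp only [mem_unitaryGroup_iff', star_eq_conjTranspose, diagonal_conjTranspose,
    diagonal_mul_diagonal, ← diagonal_one, diagonal_eq_diagonal_iff, Pi.star_apply,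
    Unitary.mem_iff_star_mul_self]

theorem transpose_of_mem_unitaryGroup {e : m → m → R}
    (he : ∀ i j, star (e i) ⬝ᵥ e j = if i = j then 1 else 0) : (of e)ᵀ ∈ unitaryGroup m R := by
  rw [mem_unitaryGroup_iff']
  ext i j
  simpa [mul_apply, dotProduct, one_apply] using he i j

theorem eq_mul_diagonal_mul_star_of_mulVec_eq_smul {e : m → m → R}
    (he : ∀ i j, star (e i) ⬝ᵥ e j = if i = j then 1 else 0) {A : Matrix m m R} {μ : m → R}
    (hA : ∀ i, A *ᵥ e i = μ i • e i) : A = (of e)ᵀ * diagonal μ * star (of e)ᵀ := by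
  have hAE : A * (of e)ᵀ = (of e)ᵀ * diagonal μ := by
    ext r j
    rw [mul_diagonal]
    simpa [mulVec, dotProduct, mul_apply, mul_comm] using congrFun (hA j) r
  rw [← hAE, mul_assoc, mem_unitaryGroup_iff.mp (transpose_of_mem_unitaryGroup he), mul_one]

end Unitary

def unitaryDiagonal {m : Type*} [Fintype m] [DecidableEq m] (α : m → Circle) :
    unitaryGroup m ℂ :=
  ⟨diagonal fun i => α i, diagonal_mem_unitaryGroup_iff.mpr fun i => (α i).coe_mem_unitary⟩

theorem eq_of_diagonal_mul_eq_mul_diagonal {m R : Type*} [Fintype m] [DecidableEq m]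
    [CommRing R] [NoZeroDivisors R] {a b : m → R} {W : Matrix m m R}
    (h : diagonal a * W = W * diagonal b) {i j : m} (hW : W i j ≠ 0) : a i = b j := by
  have hij := congrFun₂ h i j
  rw [diagonal_mul, mul_diagonal, mul_comm] at hij
  exact mul_left_cancel₀ hW hij

theorem card_filter_eq_of_isUnit {ι β R : Type*} [Fintype ι] [DecidableEq ι] [DecidableEq β]
    [CommRing R] [CharZero R] {W : Matrix ι ι R} (hW : IsUnit W) {f g : ι → β}
    (h : ∀ i j, W i j ≠ 0 → f i = g j) (c : β) : #{i | f i = c} = #{i | g i = c} := by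
  set P : Matrix ι ι R := diagonal fun i => if f i = c then 1 else 0
  set Q : Matrix ι ι R := diagonal fun i => if g i = c then 1 else 0
  have hPW : P * W = W * Q := by
    ext i j
    rw [diagonal_mul, mul_diagonal]
    by_cases hw : W i j = 0
    · simp [hw]
    · simp [h i j hw]
  obtain ⟨u, rfl⟩ := hW
  have htrace : P.trace = Q.trace := calc
    P.trace = (P * u * (u⁻¹ : (Matrix ι ι R)ˣ)).trace := by rw [mul_assoc, Units.mul_inv, mul_one]
    _ = ((u⁻¹ : (Matrix ι ι R)ˣ) * (u * Q)).trace := by rw [hPW, trace_mul_comm]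
    _ = Q.trace := by rw [← mul_assoc, Units.inv_mul, one_mul]
  simpa [P, Q, trace_diagonal, Finset.sum_boole] using htrace

theorem exists_orthonormal_mulVec_eq_smul_of_isHermitian {𝕜 ι : Type*} [RCLike 𝕜] {n : ℕ}
    {M : ι → Matrix (Fin n) (Fin n) 𝕜} (hM : ∀ i, (M i).IsHermitian)
    (hC : ∀ i j, Commute (M i) (M j)) :
    ∃ (e : Fin n → Fin n → 𝕜) (χ : Fin n → ι → 𝕜),
      (∀ a b, star (e a) ⬝ᵥ e b = if a = b then 1 else 0) ∧ ∀ a i, M i *ᵥ e a = χ a i • e a := by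
  have hT : ∀ i j, Commute (toEuclideanLin (M i)) (toEuclideanLin (M j)) := fun i j => by
    simp only [commute_iff_eq, Module.End.mul_eq_comp, ← toLpLin_mul_same, (hC i j).eq]
  obtain ⟨b, χ, hb⟩ := LinearMap.IsSymmetric.exists_orthonormalBasis_apply_eq_smul_of_commute
    finrank_euclideanSpace_fin (fun i => isSymmetric_toEuclideanLin_iff.mpr (hM i))
    (fun i j _ => hT i j)
  refine ⟨fun a => b a, χ, fun a a' => ?_, fun a i => congrArg WithLp.ofLp (hb a i)⟩
  rw [← orthonormal_iff_ite.mp b.orthonormal a a', EuclideanSpace.inner_eq_star_dotProduct,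
    dotProduct_comm]

open ComplexStarModule in
theorem exists_orthonormal_mulVec_eq_smul_of_commute_star {ι : Type*} {n : ℕ}
    {M : ι → Matrix (Fin n) (Fin n) ℂ} (hC : ∀ i j, Commute (M i) (M j))
    (hC' : ∀ i j, Commute (M i) (star (M j))) :
    ∃ (e : Fin n → Fin n → ℂ) (μ : Fin n → ι → ℂ),
      (∀ a b, star (e a) ⬝ᵥ e b = if a = b then 1 else 0) ∧ ∀ a i, M i *ᵥ e a = μ a i • e a := by
  let H : ι ⊕ ι → Matrix (Fin n) (Fin n) ℂ := Sum.elim (fun i => ℜ (M i)) (fun i => ℑ (M i))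
  have hH : ∀ k, (H k).IsHermitian := by
    rintro (i | i)
    exacts [(ℜ (M i)).2, (ℑ (M i)).2]
  have hMH : ∀ i l, Commute (M i) (H l) ∧ Commute (star (M i)) (H l) := by
    rintro i (j | j)
    · exact ⟨(Commute.realPart_left (hC j i) (hC' i j).symm).symm,
        (Commute.realPart_left (hC' j i) (hC j i).star_star).symm⟩
    · exact ⟨(Commute.imaginaryPart_left (hC j i) (hC' i j).symm).symm,
        (Commute.imaginaryPart_left (hC' j i) (hC j i).star_star).symm⟩
  have hHC : ∀ k l, Commute (H k) (H l) := by
    rintro (i | i) l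
    exacts [Commute.realPart_left (hMH i l).1 (hMH i l).2,
      Commute.imaginaryPart_left (hMH i l).1 (hMH i l).2]
  obtain ⟨e, χ, he, hχ⟩ := exists_orthonormal_mulVec_eq_smul_of_isHermitian hH hHC
  refine ⟨e, fun a i => χ a (.inl i) + Complex.I * χ a (.inr i), he, fun a i => ?_⟩
  have hre : (ℜ (M i) : Matrix (Fin n) (Fin n) ℂ) *ᵥ e a = χ a (.inl i) • e a := hχ a (.inl i)
  have him : (ℑ (M i) : Matrix (Fin n) (Fin n) ℂ) *ᵥ e a = χ a (.inr i) • e a := hχ a (.inr i)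
  rw [← realPart_add_I_smul_imaginaryPart (M i), add_mulVec, smul_mulVec, hre, him]
  module

theorem exists_orthonormal_mulVec_eq_smul_of_commute_unitary {ι : Type*} {n : ℕ}
    {U : ι → unitaryGroup (Fin n) ℂ} (hU : ∀ i j, Commute (U i) (U j)) :
    ∃ (e : Fin n → Fin n → ℂ) (μ : Fin n → ι → Circle),
      (∀ a b, star (e a) ⬝ᵥ e b = if a = b then 1 else 0) ∧
        ∀ a i, (U i : Matrix (Fin n) (Fin n) ℂ) *ᵥ e a = (μ a i : ℂ) • e a := by
  obtain ⟨e, μ, he, hμ⟩ := exists_orthonormal_mulVec_eq_smul_of_commute_star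
    (M := fun i => (U i : Matrix (Fin n) (Fin n) ℂ)) (fun i j => congrArg Subtype.val (hU i j).eq)
    (fun i j => congrArg Subtype.val (hU i j).inv_right.eq)
  have hE := transpose_of_mem_unitaryGroup he
  have hunit (a : Fin n) (i : ι) : μ a i ∈ unitary ℂ := by
    have hdiag : diagonal (μ · i) = star (of e)ᵀ * U i * (of e)ᵀ := by
      rw [eq_mul_diagonal_mul_star_of_mulVec_eq_smul he (hμ · i)]
      simp only [← mul_assoc, mem_unitaryGroup_iff'.mp hE, one_mul]
      rw [mul_assoc, mem_unitaryGroup_iff'.mp hE, mul_one]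
    have hmem : diagonal (μ · i) ∈ unitaryGroup (Fin n) ℂ := by
      rw [hdiag]
      exact mul_mem (mul_mem (Unitary.star_mem hE) (U i).2) hE
    exact diagonal_mem_unitaryGroup_iff.mp hmem a
  exact ⟨e, fun a i => ⟨μ a i, mem_sphere_zero_iff_norm.mpr
    (CStarRing.norm_of_mem_unitary (hunit a i))⟩, he, hμ⟩

end Matrix

theorem conjRel_equivalence (n : ℕ) : Equivalence (conjRel n) where
  refl _ := ⟨1, by simp, by simp⟩
  symm := fun ⟨U, h₁, h₂⟩ => ⟨U⁻¹, by rw [h₁]; group, by rw [h₂]; group⟩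
  trans := fun ⟨U, h₁, h₂⟩ ⟨V, h₁', h₂'⟩ =>
    ⟨V * U, by rw [h₁', h₁]; group, by rw [h₂', h₂]; group⟩

namespace CommPair

variable {n : ℕ}

def diag (γ : Fin n → Circle × Circle) : CommPair n :=
  ⟨(unitaryDiagonal (Prod.fst ∘ γ), unitaryDiagonal (Prod.snd ∘ γ)),
    Subtype.ext <| by simp [unitaryDiagonal, diagonal_mul_diagonal, mul_comm]⟩

theorem conjRel_diag_of_orthonormal (p : CommPair n) {e : Fin n → Fin n → ℂ}
    (he : ∀ i j, star (e i) ⬝ᵥ e j = if i = j then 1 else 0) {γ : Fin n → Circle × Circle}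
    (h₁ : ∀ i, (p.1.1 : Matrix (Fin n) (Fin n) ℂ) *ᵥ e i = ((γ i).1 : ℂ) • e i)
    (h₂ : ∀ i, (p.1.2 : Matrix (Fin n) (Fin n) ℂ) *ᵥ e i = ((γ i).2 : ℂ) • e i) :
    conjRel n (diag γ) p :=
  ⟨⟨_, transpose_of_mem_unitaryGroup he⟩,
    Subtype.ext (eq_mul_diagonal_mul_star_of_mulVec_eq_smul he h₁),
    Subtype.ext (eq_mul_diagonal_mul_star_of_mulVec_eq_smul he h₂)⟩

theorem exists_conjRel_diag (p : CommPair n) : ∃ γ, conjRel n (diag γ) p := by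
  have hU : ∀ i j, Commute (![p.1.1, p.1.2] i) (![p.1.1, p.1.2] j) := by
    have hp := p.2
    intro i j
    fin_cases i <;> fin_cases j <;> simp [Commute, SemiconjBy, hp]
  obtain ⟨e, μ, he, hμ⟩ := exists_orthonormal_mulVec_eq_smul_of_commute_unitary hU
  exact ⟨fun a => (μ a 0, μ a 1), conjRel_diag_of_orthonormal p he (hμ · 0) (hμ · 1)⟩

theorem conjRel_diag_iff {γ γ' : Fin n → Circle × Circle} :
    conjRel n (diag γ) (diag γ') ↔ Sym.ofFn γ = Sym.ofFn γ' := by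
  classical
  rw [Sym.ofFn_eq_ofFn_iff]
  constructor
  · rintro ⟨U, h₁, h₂⟩ c
    have h₁' := congrArg Subtype.val (eq_mul_inv_iff_mul_eq.mp h₁)
    have h₂' := congrArg Subtype.val (eq_mul_inv_iff_mul_eq.mp h₂)
    refine (card_filter_eq_of_isUnit (Unitary.toUnits U).isUnit (fun i j hW => ?_) c).symm
    exact Prod.ext (Circle.ext (eq_of_diagonal_mul_eq_mul_diagonal h₁' hW))
      (Circle.ext (eq_of_diagonal_mul_eq_mul_diagonal h₂' hW))
  · intro h
    obtain ⟨σ, rfl⟩ := Equiv.Perm.exists_comp_eq_of_card_filter_eq h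
    refine conjRel_diag_of_orthonormal _ (e := fun i => Pi.single (σ.symm i) 1)
      (fun i j => ?_) (fun i => ?_) (fun i => ?_)
    · simp [Pi.single_apply, eq_comm]
    all_goals simp [diag, unitaryDiagonal, ← Pi.single_smul']

noncomputable def jointSpectrum (p : CommPair n) : Sym (Circle × Circle) n :=
  Sym.ofFn (exists_conjRel_diag p).choose

theorem jointSpectrum_eq {p : CommPair n} {γ : Fin n → Circle × Circle}
    (h : conjRel n (diag γ) p) : jointSpectrum p = Sym.ofFn γ :=
  conjRel_diag_iff.mp <| (conjRel_equivalence n).trans (exists_conjRel_diag p).choose_spec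
    ((conjRel_equivalence n).symm h)

theorem conjRel_iff_jointSpectrum_eq {p q : CommPair n} :
    conjRel n p q ↔ jointSpectrum p = jointSpectrum q := by
  obtain ⟨γ, hγ⟩ := exists_conjRel_diag p
  obtain ⟨γ', hγ'⟩ := exists_conjRel_diag q
  have hr := conjRel_equivalence n
  rw [jointSpectrum_eq hγ, jointSpectrum_eq hγ', ← conjRel_diag_iff]
  exact ⟨fun h => hr.trans (hr.trans hγ h) (hr.symm hγ'),
    fun h => hr.trans (hr.trans (hr.symm hγ) h) hγ'⟩

end CommPair

open CommPair in
/-- The map sending a commuting pair `(A, B)` of unitary matrices to the unordered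
`n`-tuple of eigenvalue pairs `[(α₁,β₁),…,(αₙ,βₙ)]` (taken with respect to a common orthonormal
eigenbasis) induces a bijection `Hom(ℤ×ℤ, U(n))/U(n) → Symⁿ(S¹×S¹)`. -/
theorem commuting_pairs_mod_conj_equiv_sym_torus (n : ℕ) :
    ∃ F : Quot (conjRel n) → Sym (Circle × Circle) n,
      Function.Bijective F ∧
      ∀ (p : CommPair n) (e : Fin n → (Fin n → ℂ)) (α β : Fin n → Circle),
        -- `e` is an orthonormal (eigen)basis of ℂⁿ
        (∀ i j, star (e i) ⬝ᵥ e j = if i = j then (1 : ℂ) else 0) →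
        -- each `e i` is a common eigenvector, with eigenvalues `α i` for `A` and `β i` for `B`
        (∀ i, (p.1.1 : Matrix (Fin n) (Fin n) ℂ) *ᵥ e i = (α i : ℂ) • e i) →
        (∀ i, (p.1.2 : Matrix (Fin n) (Fin n) ℂ) *ᵥ e i = (β i : ℂ) • e i) →
        F (Quot.mk _ p) =
          ⟨Multiset.map (fun i => (α i, β i)) Finset.univ.val, by simp⟩ := by
  refine ⟨Quot.lift jointSpectrum fun _ _ => conjRel_iff_jointSpectrum_eq.mp, ⟨?_, ?_⟩, ?_⟩
  · rintro ⟨p⟩ ⟨q⟩ h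
    exact Quot.sound (conjRel_iff_jointSpectrum_eq.mpr h)
  · intro s
    obtain ⟨γ, rfl⟩ := Sym.ofFn_surjective s
    exact ⟨Quot.mk _ (diag γ), jointSpectrum_eq ((conjRel_equivalence n).refl _)⟩
  · intro p e α β he hα hβ
    exact jointSpectrum_eq (conjRel_diag_of_orthonormal p he hα hβ)
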